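/- (Invariance of the G-measure under censoring.) Let P : ℕ → ℕ → ℝ≥0∞ be row-stochastic, and for m ≥ 1 let E_m = {1, 2, …, m}. For states 1 ≤ j < i, the G-measure of a transition function M on a set containing E_i is defined by g_{i,j}(M) := (M^{E_i})_{i,j} / (1 − (M^{E_i})_{i,i}). Then for all 1 ≤ j < i ≤ n, the G-measure computed from the censored chain P^{E_n} agrees with that of P: g_{i,j}(P^{E_n}) = g_{i,j}(P). -/

import Mathlib

open scoped ENNReal

/-- The censored (taboo-path) transition probability. -/
noncomputable def censored {α : Type*} (P : α → α → ℝ≥0∞) (E : Set α) (i j : α) : ℝ≥0∞ :=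
  P i j + ∑' (n : ℕ), ∑' (w : Fin (n + 1) → ↥Eᶜ),
    P i ↑(w 0) * (∏ k : Fin n, P ↑(w k.castSucc) ↑(w k.succ)) * P ↑(w (Fin.last n)) j

/-- A countable-state transition function is row-stochastic if each row sums to 1. -/
def RowStoch (P : ℕ → ℕ → ℝ≥0∞) : Prop := ∀ i, ∑' j, P i j = 1

/-- The G-measure of a transition function `M` relative to the censoring set `E` (playing
the role of `E_i = {1, …, i}`): `g_{i,j} = (M^{E})_{i,j} / (1 - (M^{E})_{i,i})`. -/
noncomputable def gMeasure {α : Type*} (M : α → α → ℝ≥0∞) (E : Set α) (i j : α) : ℝ≥0∞ :=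
  censored M E i j / (1 - censored M E i i)

/-!
Both censored chains are sums of path weights. A path of `P` from `x` to `y` with all
intermediate states outside `E_i` is cut at its visits to `E_n \ E_i`; the pieces between two
cuts are excursions outside `E_n`, whose total weight is an entry of `P^{E_n}`. This cutting is a
bijection onto paths of `P^{E_n}` avoiding `{1, …, i}` together with one excursion per step, so
`(P^{E_n})^{E_i} = P^{E_i}` entrywise and the two G-measures agree term by term.
-/

noncomputable def pathWeight {α : Type*} (P : α → α → ℝ≥0∞) : α → α → List α → ℝ≥0∞
  | i, j, [] => P i j
  | i, j, a :: l => P i a * pathWeight P a j l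

noncomputable def pathSum {α γ : Type*} (P : α → α → ℝ≥0∞) (f : γ → α) (x y : α) : ℝ≥0∞ :=
  ∑' l : List γ, pathWeight P x y (l.map f)

section PathWeight

variable {α : Type*} (P : α → α → ℝ≥0∞)

@[simp] lemma pathWeight_nil (i j : α) : pathWeight P i j [] = P i j := rfl

@[simp] lemma pathWeight_cons (i j a : α) (l : List α) :
    pathWeight P i j (a :: l) = P i a * pathWeight P a j l := rfl

lemma pathWeight_append_cons (i j a : α) (u v : List α) :
    pathWeight P i j (u ++ a :: v) = pathWeight P i a u * pathWeight P a j v := by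
  induction u generalizing i with
  | nil => simp
  | cons b u ih => simp [ih, mul_assoc]

lemma pathWeight_comap {β : Type*} (g : β → α) (x y : β) (l : List β) :
    pathWeight (fun a b => P (g a) (g b)) x y l = pathWeight P (g x) (g y) (l.map g) := by
  induction l generalizing x with
  | nil => rfl
  | cons a l ih => simp [ih]

lemma pathWeight_ofFn (i j : α) {n : ℕ} (w : Fin (n + 1) → α) :
    pathWeight P i j (List.ofFn w) =
      P i (w 0) * (∏ k : Fin n, P (w k.castSucc) (w k.succ)) * P (w (Fin.last n)) j := by
  induction n generalizing i with
  | zero => simp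
  | succ n ih =>
    rw [List.ofFn_succ, pathWeight_cons, ih (w 0) (fun k => w k.succ)]
    simp [Fin.prod_univ_succ, Fin.succ_last, mul_assoc]

end PathWeight

lemma ENNReal.tsum_list_eq_tsum_fin {X : Type*} (g : List X → ℝ≥0∞) :
    ∑' l : List X, g l = ∑' n : ℕ, ∑' w : Fin n → X, g (List.ofFn w) := by
  rw [← List.equivSigmaTuple.symm.tsum_eq g, ENNReal.tsum_sigma']
  rfl

lemma ENNReal.tsum_fin_succ {X : Type*} (m : ℕ) (F : (Fin (m + 1) → X) → ℝ≥0∞) :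
    ∑' w : Fin (m + 1) → X, F w = ∑' x : X, ∑' v : Fin m → X, F (Fin.cons x v) := by
  rw [← (Fin.consEquiv fun _ => X).tsum_eq F, ENNReal.tsum_prod']
  rfl

lemma censored_eq_pathSum {α : Type*} (P : α → α → ℝ≥0∞) (E : Set α) :
    censored P E = pathSum P (Subtype.val : ↥Eᶜ → α) := by
  ext i j
  rw [pathSum, ENNReal.tsum_list_eq_tsum_fin, tsum_eq_zero_add' ENNReal.summable, censored]
  congr 1
  · simp
  · refine tsum_congr fun n => tsum_congr fun w => ?_
    rw [List.map_ofFn, pathWeight_ofFn]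
    rfl

section Blocks

variable {β γ : Type*}

/-- A word over `β ⊕ γ` is cut before each letter of `β`: an initial run of `γ`-letters,
followed by blocks, each a `β`-letter with the run of `γ`-letters after it. -/
def joinBlocks (p : List γ × List (β × List γ)) : List (β ⊕ γ) :=
  p.1.map Sum.inr ++ p.2.flatMap fun q => Sum.inl q.1 :: q.2.map Sum.inr

def splitBlocks : List (β ⊕ γ) → List γ × List (β × List γ)
  | [] => ([], [])
  | Sum.inr c :: l => (c :: (splitBlocks l).1, (splitBlocks l).2)
  | Sum.inl b :: l => ([], (b, (splitBlocks l).1) :: (splitBlocks l).2)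

lemma joinBlocks_cons (t : List γ) (b : β) (l : List γ) (ps : List (β × List γ)) :
    joinBlocks (t, (b, l) :: ps) = t.map Sum.inr ++ Sum.inl b :: joinBlocks (l, ps) := by
  simp [joinBlocks]

lemma splitBlocks_map_inr_append (t : List γ) (r : List (β ⊕ γ)) :
    splitBlocks (t.map Sum.inr ++ r) = (t ++ (splitBlocks r).1, (splitBlocks r).2) := by
  induction t with
  | nil => simp
  | cons c t ih => simp [splitBlocks, ih]

lemma splitBlocks_joinBlocks (p : List γ × List (β × List γ)) :
    splitBlocks (joinBlocks p) = p := by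
  obtain ⟨t, ps⟩ := p
  induction ps generalizing t with
  | nil => simpa [joinBlocks, splitBlocks] using splitBlocks_map_inr_append (β := β) t []
  | cons q ps ih =>
    rw [joinBlocks_cons, splitBlocks_map_inr_append]
    simp [splitBlocks, ih]

lemma joinBlocks_splitBlocks (l : List (β ⊕ γ)) : joinBlocks (splitBlocks l) = l := by
  induction l with
  | nil => rfl
  | cons a l ih =>
    cases a with
    | inl b => simpa [splitBlocks, joinBlocks_cons] using ih
    | inr c => simpa [splitBlocks, joinBlocks] using ih

def blocksEquiv : List (β ⊕ γ) ≃ List γ × List (β × List γ) where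
  toFun := splitBlocks
  invFun := joinBlocks
  left_inv := joinBlocks_splitBlocks
  right_inv := splitBlocks_joinBlocks

end Blocks

section SumElim

variable {α β γ : Type*} (P : α → α → ℝ≥0∞) (fβ : β → α) (fγ : γ → α) (y : α)

noncomputable def blocksWeight : α → List γ → List (β × List γ) → ℝ≥0∞
  | x, t, [] => pathWeight P x y (t.map fγ)
  | x, t, (b, l) :: ps => pathWeight P x (fβ b) (t.map fγ) * blocksWeight (fβ b) l ps

lemma pathWeight_joinBlocks (x : α) (t : List γ) (ps : List (β × List γ)) :
    pathWeight P x y ((joinBlocks (t, ps)).map (Sum.elim fβ fγ)) =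
      blocksWeight P fβ fγ y x t ps := by
  induction ps generalizing x t with
  | nil => simp [joinBlocks, blocksWeight, Function.comp_def]
  | cons q ps ih =>
    rw [joinBlocks_cons, List.map_append, List.map_cons, Sum.elim_inl, pathWeight_append_cons,
      ih]
    simp [blocksWeight, Function.comp_def]

lemma tsum_blocksWeight_ofFn (m : ℕ) (x : α) :
    ∑' v : Fin m → β × List γ, ∑' t : List γ, blocksWeight P fβ fγ y x t (List.ofFn v) =
      ∑' q : Fin m → β, pathWeight (pathSum P fγ) x y ((List.ofFn q).map fβ) := by
  induction m generalizing x with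
  | zero => simp [blocksWeight, pathSum]
  | succ m ih =>
    rw [ENNReal.tsum_fin_succ, ENNReal.tsum_fin_succ, ENNReal.tsum_prod']
    refine tsum_congr fun b => ?_
    simp only [List.ofFn_cons, List.map_cons, pathWeight_cons, blocksWeight,
      ENNReal.tsum_mul_right, ENNReal.tsum_mul_left]
    rw [← ih, ENNReal.tsum_comm (α := List γ)]
    rfl

theorem pathSum_sum_elim :
    pathSum P (Sum.elim fβ fγ) = pathSum (pathSum P fγ) fβ := by
  ext x y
  calc pathSum P (Sum.elim fβ fγ) x y
      = ∑' p : List γ × List (β × List γ), blocksWeight P fβ fγ y x p.1 p.2 := by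
        rw [pathSum, ← blocksEquiv.symm.tsum_eq]
        exact tsum_congr fun p => pathWeight_joinBlocks P fβ fγ y x p.1 p.2
    _ = ∑' m : ℕ, ∑' v : Fin m → β × List γ, ∑' t : List γ,
          blocksWeight P fβ fγ y x t (List.ofFn v) := by
        rw [ENNReal.tsum_prod', ENNReal.tsum_comm, ENNReal.tsum_list_eq_tsum_fin]
    _ = pathSum (pathSum P fγ) fβ x y := by
        simp only [tsum_blocksWeight_ofFn, pathSum, ENNReal.tsum_list_eq_tsum_fin
          fun q : List β => pathWeight (pathSum P fγ) x y (q.map fβ)]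

end SumElim

section Transitivity

variable {α : Type*} (P : α → α → ℝ≥0∞)

lemma pathSum_comp_equiv {γ δ : Type*} (f : γ → α) (e : δ ≃ γ) :
    pathSum P (f ∘ e) = pathSum P f := by
  ext x y
  rw [pathSum, pathSum, ← (Equiv.listEquivOfEquiv e).tsum_eq]
  simp [Equiv.listEquivOfEquiv, List.map_map]

lemma pathSum_comap {β γ : Type*} (g : β → α) (f : γ → β) (x y : β) :
    pathSum (fun a b => P (g a) (g b)) f x y = pathSum P (g ∘ f) (g x) (g y) := by
  simp only [pathSum, pathWeight_comap, List.map_map]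

open Classical in
noncomputable def sumComplEquivCompl {A B : Set α} (hAB : A ⊆ B) :
    ↥{z : ↥B | ↑z ∈ A}ᶜ ⊕ ↥Bᶜ ≃ ↥Aᶜ where
  toFun := Sum.elim (fun z => ⟨z.1.1, z.2⟩) (fun z => ⟨z.1, fun h => z.2 (hAB h)⟩)
  invFun z := if h : z.1 ∈ B then Sum.inl ⟨⟨z, h⟩, z.2⟩ else Sum.inr ⟨z, h⟩
  left_inv s := by
    rcases s with z | z
    · simp [z.1.2]
    · simp [show (z : α) ∉ B from z.2]
  right_inv z := by by_cases h : z.1 ∈ B <;> simp [h]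

theorem censored_censored {A B : Set α} (hAB : A ⊆ B) (x y : ↥B) :
    censored (fun a b : ↥B => censored P B a b) {z : ↥B | ↑z ∈ A} x y = censored P A x y := by
  rw [censored_eq_pathSum _ {z : ↥B | ↑z ∈ A}, pathSum_comap, censored_eq_pathSum P B,
    ← pathSum_sum_elim, censored_eq_pathSum P A,
    ← pathSum_comp_equiv P _ (sumComplEquivCompl hAB)]
  congr 1
  ext (z | z) <;> rfl

end Transitivity

theorem gMeasure_invariant_general (P : ℕ → ℕ → ℝ≥0∞)
    (n i j : ℕ) (h1 : 1 ≤ j) (hji : j < i) (hin : i ≤ n) :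
    gMeasure (fun a b : ↥(Set.Icc 1 n) => censored P (Set.Icc 1 n) ↑a ↑b)
        {x : ↥(Set.Icc 1 n) | ↑x ∈ Set.Icc 1 i}
        ⟨i, ⟨h1.trans hji.le, hin⟩⟩ ⟨j, ⟨h1, hji.le.trans hin⟩⟩ =
      gMeasure P (Set.Icc 1 i) i j := by
  simp only [gMeasure, censored_censored P (Set.Icc_subset_Icc_right hin)]

/-- Invariance of the G-measure under censoring: for `1 ≤ j < i ≤ n`, the G-measure
computed from the censored chain `P^{E_n}` (censoring it further to `E_i`) agrees with
the G-measure of `P`. -/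
theorem gMeasure_invariant (P : ℕ → ℕ → ℝ≥0∞) (hP : RowStoch P)
    (n i j : ℕ) (h1 : 1 ≤ j) (hji : j < i) (hin : i ≤ n) :
    gMeasure (fun a b : ↥(Set.Icc 1 n) => censored P (Set.Icc 1 n) ↑a ↑b)
        {x : ↥(Set.Icc 1 n) | ↑x ∈ Set.Icc 1 i}
        ⟨i, ⟨h1.trans hji.le, hin⟩⟩ ⟨j, ⟨h1, hji.le.trans hin⟩⟩ =
      gMeasure P (Set.Icc 1 i) i j :=
  gMeasure_invariant_general P n i j h1 hji hin
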